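/- arXiv:1905.03492 — 3 statements merged into one kernel-verified Lean document; each statement's English description precedes it below -/
import Mathlib

section
/- Let A be a finite-dimensional selfinjective algebra over a field K, I a two-sided ideal of A, and e an idempotent of A with l_A(I) = eI. Then the socle of A (as a two-sided ideal) is contained in I. -/
/-!
If a simple right ideal `m` is not contained in the right ideal `J`, then `m ∩ J = 0`, so the
map `m ⊕ J → A` that is the identity on `m` and zero on `J` extends, by self-injectivity, to left
multiplication by some `c ∈ A`. Then `c` annihilates `J`; if `l_A(J) ⊆ J` (as happens when
`l_A(I) = eI`), also `c ∈ J`, whence `c² = 0`, while `c` acts as the identity on `m ≠ 0`.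
-/

/-- The left annihilator of a subset of a ring. -/
def lAnn {A : Type*} [Ring A] (S : Set A) : Set A := {a : A | ∀ x ∈ S, a * x = 0}

/-- The socle of `A` as a right `A`-module: the sup of all simple (atomic) right ideals. -/
def rightSocle (A : Type*) [Ring A] : Submodule Aᵐᵒᵖ A :=
  sSup {m : Submodule Aᵐᵒᵖ A | IsAtom m}

section

variable {A : Type*} [Ring A]

theorem LinearMap.apply_eq_apply_one_mul (g : A →ₗ[Aᵐᵒᵖ] A) (x : A) : g x = g 1 * x := by
  rw [← op_smul_eq_mul, ← map_smul, op_smul_eq_mul, one_mul]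

def Ideal.toRightIdeal (I : Ideal A) (hI : ∀ x ∈ I, ∀ a : A, x * a ∈ I) : Submodule Aᵐᵒᵖ A where
  carrier := I
  add_mem' := I.add_mem
  zero_mem' := I.zero_mem
  smul_mem' a _ hx := hI _ hx a.unop

theorem exists_mul_eq_self_and_mul_eq_zero_of_disjoint [Module.Injective Aᵐᵒᵖ A]
    {m J : Submodule Aᵐᵒᵖ A} (h : Disjoint m J) :
    ∃ c : A, (∀ s ∈ m, c * s = s) ∧ ∀ x ∈ J, c * x = 0 := by
  let f := LinearMap.id.toPMap m
  let z := (0 : A →ₗ[Aᵐᵒᵖ] A).toPMap J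
  have hfz := LinearPMap.sup_h_of_disjoint f z h
  obtain ⟨g, hg⟩ := Module.Injective.out (f.sup z hfz).domain.subtype
    (Submodule.injective_subtype _) (f.sup z hfz).toFun
  have hleft := f.left_le_sup z hfz
  have hright := f.right_le_sup z hfz
  refine ⟨g 1, fun s hs => ?_, fun x hx => ?_⟩
  · rw [← g.apply_eq_apply_one_mul]
    exact (hg ⟨s, hleft.1 hs⟩).trans (hleft.2 (x := ⟨s, hs⟩) rfl).symm
  · rw [← g.apply_eq_apply_one_mul]
    exact (hg ⟨x, hright.1 hx⟩).trans (hright.2 (x := ⟨x, hx⟩) rfl).symm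

theorem le_of_isAtom_of_lAnn_subset [Module.Injective Aᵐᵒᵖ A] {m J : Submodule Aᵐᵒᵖ A}
    (hm : IsAtom m) (hJ : lAnn (J : Set A) ⊆ J) : m ≤ J := by
  by_contra hmJ
  obtain ⟨c, hcm, hcJ⟩ := exists_mul_eq_self_and_mul_eq_zero_of_disjoint
    (hm.not_le_iff_disjoint.mp hmJ)
  have hcc : c * c = 0 := hcJ c (hJ hcJ)
  obtain ⟨s, hs, hs0⟩ := Submodule.exists_mem_ne_zero_of_ne_bot hm.1
  refine hs0 ?_
  calc s = c * (c * s) := by rw [hcm s hs, hcm s hs]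
    _ = 0 := by rw [← mul_assoc, hcc, zero_mul]

theorem rightSocle_le_of_lAnn_subset [Module.Injective Aᵐᵒᵖ A] {J : Submodule Aᵐᵒᵖ A}
    (hJ : lAnn (J : Set A) ⊆ J) : rightSocle A ≤ J :=
  sSup_le fun _ hm => le_of_isAtom_of_lAnn_subset hm hJ

end

theorem socle_le_of_lAnn_eq_general
    {A : Type*} [Ring A]
    [Module.Injective Aᵐᵒᵖ A]
    (I : Ideal A) (hI : ∀ x ∈ I, ∀ a : A, x * a ∈ I)  -- `I` is a two-sided ideal
    (e : A)
    (hann : lAnn (I : Set A) = (fun x => e * x) '' (I : Set A)) :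
    ((rightSocle A : Submodule Aᵐᵒᵖ A) : Set A) ⊆ (I : Set A) := by
  have hJ : lAnn (I : Set A) ⊆ I := by
    rw [hann]
    rintro _ ⟨x, hx, rfl⟩
    exact I.mul_mem_left e hx
  exact rightSocle_le_of_lAnn_subset (J := I.toRightIdeal hI) hJ

/-- Let `A` be a finite-dimensional selfinjective algebra over a field `K`,
`I` a two-sided ideal of `A`, and `e` an idempotent of `A` with `l_A(I) = eI`.
Then the socle of `A` is contained in `I`. -/
theorem socle_le_of_lAnn_eq
    {K A : Type*} [Field K] [Ring A] [Algebra K A] [FiniteDimensional K A]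
    [Module.Injective Aᵐᵒᵖ A]
    (I : Ideal A) (hI : ∀ x ∈ I, ∀ a : A, x * a ∈ I)  -- `I` is a two-sided ideal
    (e : A) (he : IsIdempotentElem e)
    (hann : lAnn (I : Set A) = (fun x => e * x) '' (I : Set A)) :
    ((rightSocle A : Submodule Aᵐᵒᵖ A) : Set A) ⊆ (I : Set A) :=
  socle_le_of_lAnn_eq_general I hI e hann
end

section
/- Let A be a finite-dimensional selfinjective algebra over a field K, I an ideal of A, and e an idempotent of A such that l_A(I) = eI. Then l_{eAe}(I) = eIe = r_{eAe}(I), where annihilators are computed inside the corner algebra eAe acting on I. -/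
/-!
Since `l_A(I) = eI`, every element of `l_A(I)` lies in `I` and is fixed by left multiplication
by `e`. For `x, y ∈ I` the element `x(ey)` lies in the left ideal `l_A(I)`, so
`x(ey) = (ex)(ey) = 0`: hence `Ie ⊆ l_A(I)`, which gives `eIe ⊆ l_{eAe}(I) ∩ r_{eAe}(I)`, while
`l_{eAe}(I) ⊆ eIe` is immediate. For `z ∈ r_{eAe}(I)` we get `l_A(I) z = eIz = 0`, so
`r_{eAe}(I) ⊆ I` is the double annihilator property `r(l(T)) = T` of right ideals `T`.

Because `A_A` is injective, `r(l(T)) = T` follows once every simple right module embeds in `A_A`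
(the Kasch property). The summands `W` of `A_A` are injective and projective of finite length;
if `W` is indecomposable, Fitting's lemma gives it a unique simple submodule `soc W` and a
unique simple quotient `top W`, and finitely many of them generate `A_A`, so every simple module
is some `top W`. An isomorphism `soc W ≅ soc W'` extends to `W ≅ W'`, so there are at least as
many isomorphism types of socles as of tops, while sending `soc W` to the top isomorphic to it
is injective on types. Hence every simple module is a socle.
-/

open MulOpposite

universe u v w

theorem Submodule.mkQ_comp_subtype_surjective {R M : Type*} [Ring R] [AddCommGroup M]
    [Module R M] {P Q : Submodule R M} (h : P ⊔ Q = ⊤) :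
    Function.Surjective (P.mkQ ∘ₗ Q.subtype) := by
  rw [← LinearMap.range_eq_top, LinearMap.range_comp, Q.range_subtype, P.map_mkQ_eq_top, h]

theorem IsComplemented.of_sup_eq {α : Type*} [Lattice α] [BoundedOrder α] [IsModularLattice α]
    {u v w : α} (hw : IsComplemented w) (huv : Disjoint u v) (hsup : u ⊔ v = w) :
    IsComplemented u :=
  let ⟨c, hc⟩ := hw
  ⟨v ⊔ c, huv.disjoint_sup_right_of_disjoint_sup_left (hsup ▸ hc.disjoint),
    codisjoint_iff.mpr (by rw [← sup_assoc, hsup, hc.sup_eq_top])⟩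

section Nilpotent

variable {R M N : Type*} [Ring R] [AddCommGroup M] [Module R M] [AddCommGroup N] [Module R N]
  {f : Module.End R M}

theorem LinearMap.eq_zero_of_comp_eq_self (hf : IsNilpotent f) {g : M →ₗ[R] N}
    (hg : g ∘ₗ f = g) : g = 0 := by
  obtain ⟨n, hn⟩ := hf
  have hpow (k : ℕ) : g ∘ₗ (f ^ k) = g := by
    induction k with
    | zero => rfl
    | succ k ih => rw [pow_succ, Module.End.mul_eq_comp, ← LinearMap.comp_assoc, ih, hg]
  simpa [hn] using (hpow n).symm

theorem LinearMap.eq_zero_of_comp_eq_self' (hf : IsNilpotent f) {g : N →ₗ[R] M}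
    (hg : f ∘ₗ g = g) : g = 0 := by
  obtain ⟨n, hn⟩ := hf
  have hpow (k : ℕ) : (f ^ k) ∘ₗ g = g := by
    induction k with
    | zero => rfl
    | succ k ih => rw [pow_succ', Module.End.mul_eq_comp, LinearMap.comp_assoc, ih, hg]
  simpa [hn] using (hpow n).symm

end Nilpotent

theorem LinearMap.nonempty_linearEquiv_of_injective {R M N : Type*} [Ring R] [AddCommGroup M]
    [Module R M] [AddCommGroup N] [Module R N] [IsArtinian R M] {f : M →ₗ[R] N}
    {g : N →ₗ[R] M} (hf : Function.Injective f) (hg : Function.Injective g) :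
    Nonempty (M ≃ₗ[R] N) :=
  have hgf := IsArtinian.bijective_of_injective_endomorphism (g ∘ₗ f) (hg.comp hf)
  ⟨(LinearEquiv.ofBijective g ⟨hg, .of_comp hgf.2⟩).symm⟩

namespace Submodule

variable {R M : Type*} [Ring R] [AddCommGroup M] [Module R M] {W C : Submodule R M}

theorem injective_of_isCompl [Module.Injective R M] (h : IsCompl W C) :
    Module.Injective R W :=
  ⟨fun _ _ _ _ _ _ f hf g =>
    let ⟨k, hk⟩ := Module.Injective.out f hf (W.subtype ∘ₗ g)
    ⟨projectionOnto W C h ∘ₗ k, fun x => by simp [hk, projectionOnto_apply_left]⟩⟩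

theorem projective_of_isCompl [Module.Projective R M] (h : IsCompl W C) :
    Module.Projective R W :=
  .of_split W.subtype _ (projectionOnto_comp_subtype h)

end Submodule

namespace Module

def IsIndecomposable (R M : Type*) [Ring R] [AddCommGroup M] [Module R M] : Prop :=
  Nontrivial M ∧ ∀ P : Submodule R M, IsComplemented P → P = ⊥ ∨ P = ⊤

namespace IsIndecomposable

variable {R : Type u} {M : Type v} [Ring R] [AddCommGroup M] [Module R M]
  [IsArtinian R M] [IsNoetherian R M]

theorem bijective_or_isNilpotent (hM : IsIndecomposable R M) (f : Module.End R M) :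
    Function.Bijective f ∨ IsNilpotent f := by
  obtain ⟨n, hcompl, hn⟩ :=
    (f.eventually_isCompl_ker_pow_range_pow.and (Filter.eventually_ge_atTop 1)).exists
  rcases hM.2 _ ⟨_, hcompl⟩ with hker | hker
  · refine Or.inl (IsArtinian.bijective_of_injective_endomorphism f ?_)
    rw [← LinearMap.ker_eq_bot, eq_bot_iff, ← hker]
    obtain ⟨k, rfl⟩ := Nat.exists_eq_add_of_le' hn
    rw [pow_succ, Module.End.mul_eq_comp]
    exact LinearMap.ker_le_ker_comp f _
  · exact Or.inr ⟨n, LinearMap.ker_eq_top.mp hker⟩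

theorem eq_of_isCoatom [Module.Projective R M] (hM : IsIndecomposable R M)
    {P Q : Submodule R M} (hP : IsCoatom P) (hQ : IsCoatom Q) : P = Q := by
  by_contra hne
  obtain ⟨h, hh⟩ := Module.projective_lifting_property _ P.mkQ
    (Submodule.mkQ_comp_subtype_surjective (hP.sup_eq_top_of_ne hQ hne))
  have hnil : IsNilpotent (Q.subtype ∘ₗ h) := by
    refine (hM.bijective_or_isNilpotent _).resolve_left fun hbij => hQ.ne_top ?_
    rw [eq_top_iff, ← LinearMap.range_eq_top.mpr hbij.2, LinearMap.range_comp]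
    exact Submodule.map_subtype_le Q _
  have hzero : P.mkQ = 0 :=
    LinearMap.eq_zero_of_comp_eq_self hnil (by rw [← LinearMap.comp_assoc, hh])
  exact hP.ne_top (by rw [← P.ker_mkQ, hzero, LinearMap.ker_zero])

theorem nonempty_linearEquiv_of_surjective [Module.Projective R M]
    (hM : IsIndecomposable R M) {Q Q' : Type*}
    [AddCommGroup Q] [Module R Q] [IsSimpleModule R Q] [AddCommGroup Q'] [Module R Q']
    [IsSimpleModule R Q'] {f : M →ₗ[R] Q} {g : M →ₗ[R] Q'} (hf : Function.Surjective f)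
    (hg : Function.Surjective g) : Nonempty (Q ≃ₗ[R] Q') :=
  have hker : LinearMap.ker f = LinearMap.ker g := hM.eq_of_isCoatom
    (isSimpleModule_iff_isCoatom.mp (.congr (f.quotKerEquivOfSurjective hf)))
    (isSimpleModule_iff_isCoatom.mp (.congr (g.quotKerEquivOfSurjective hg)))
  ⟨(f.quotKerEquivOfSurjective hf).symm ≪≫ₗ Submodule.quotEquivOfEq _ _ hker ≪≫ₗ
    g.quotKerEquivOfSurjective hg⟩

variable [Module.Injective R M] [Small.{v} R]

theorem eq_of_isAtom (hM : IsIndecomposable R M) {S T : Submodule R M} (hS : IsAtom S)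
    (hT : IsAtom T) : S = T := by
  by_contra hne
  have hκ : Function.Injective (T.mkQ ∘ₗ S.subtype) := by
    rw [← LinearMap.ker_eq_bot, LinearMap.ker_comp, T.ker_mkQ,
      ← Submodule.disjoint_iff_comap_eq_bot]
    exact hS.disjoint_of_ne hT hne
  obtain ⟨h, hh⟩ := Module.Injective.extension_property R M _ _ _ hκ S.subtype
  have hnil : IsNilpotent (h ∘ₗ T.mkQ) := by
    refine (hM.bijective_or_isNilpotent _).resolve_left fun hbij => hT.ne_bot ?_
    rw [eq_bot_iff, ← T.ker_mkQ, ← LinearMap.ker_eq_bot.mpr hbij.1, LinearMap.ker_comp]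
    exact Submodule.comap_mono bot_le
  have hzero : S.subtype = 0 :=
    LinearMap.eq_zero_of_comp_eq_self' hnil (by rw [LinearMap.comp_assoc, hh])
  exact hS.ne_bot (by rw [← S.range_subtype, hzero, LinearMap.range_zero])

theorem exists_injective_of_isAtom (hM : IsIndecomposable R M) {N : Type w} [AddCommGroup N]
    [Module R N] [Module.Injective R N] [Small.{w} R] {S : Submodule R M} (hS : IsAtom S)
    {f : S →ₗ[R] N} (hf : Function.Injective f) : ∃ g : M →ₗ[R] N, Function.Injective g := by
  obtain ⟨g, hg⟩ := Module.Injective.extension_property R N _ _ S.subtype S.injective_subtype f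
  refine ⟨g, LinearMap.ker_eq_bot.mp ?_⟩
  by_contra hker
  obtain ⟨T, hT, hTle⟩ := (eq_bot_or_exists_atom_le (LinearMap.ker g)).resolve_left hker
  obtain ⟨x, hxS, hx⟩ := (Submodule.ne_bot_iff _).mp hS.ne_bot
  have hfx : f ⟨x, hxS⟩ = f 0 := by
    rw [← hg, LinearMap.comp_apply, map_zero]
    exact hTle (hM.eq_of_isAtom hT hS ▸ hxS)
  exact hx (congrArg Subtype.val (hf hfx))

theorem nonempty_linearEquiv_of_isAtom (hM : IsIndecomposable R M) {M' : Type v}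
    [AddCommGroup M'] [Module R M'] [Module.Injective R M'] [IsArtinian R M'] [IsNoetherian R M']
    (hM' : IsIndecomposable R M') {S : Submodule R M} {S' : Submodule R M'} (hS : IsAtom S)
    (hS' : IsAtom S') (e : S ≃ₗ[R] S') : Nonempty (M ≃ₗ[R] M') :=
  let ⟨_, hf⟩ := hM.exists_injective_of_isAtom hS (f := S'.subtype ∘ₗ e.toLinearMap)
    (S'.injective_subtype.comp e.injective)
  let ⟨_, hg⟩ := hM'.exists_injective_of_isAtom hS' (f := S.subtype ∘ₗ e.symm.toLinearMap)
    (S.injective_subtype.comp e.symm.injective)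
  LinearMap.nonempty_linearEquiv_of_injective hf hg

end IsIndecomposable

variable {R M : Type*} [Ring R] [AddCommGroup M] [Module R M]

theorem exists_isIndecomposable_not_le [IsArtinian R M] {P : Submodule R M} (hP : P ≠ ⊤) :
    ∃ W : Submodule R M, IsComplemented W ∧ IsIndecomposable R W ∧ ¬ W ≤ P := by
  obtain ⟨W, ⟨hWc, hWP⟩, hmin⟩ :=
    wellFounded_lt.has_min {W : Submodule R M | IsComplemented W ∧ ¬ W ≤ P}
      ⟨⊤, isComplemented_top, fun h => hP (top_le_iff.mp h)⟩
  have hsup {N N' : Submodule R W} (h : IsCompl N N') :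
      N.map W.subtype ⊔ N'.map W.subtype = W := by
    rw [← Submodule.map_sup, h.sup_eq_top, Submodule.map_subtype_top]
  have eq_top_of_not_le {N N' : Submodule R W} (h : IsCompl N N')
      (hNP : ¬ N.map W.subtype ≤ P) : N = ⊤ := by
    have hNc : IsComplemented (N.map W.subtype) :=
      hWc.of_sup_eq (Submodule.disjoint_map W.injective_subtype h.disjoint) (hsup h)
    have hNW : N.map W.subtype = W :=
      (Submodule.map_subtype_le W N).eq_of_not_lt (hmin _ ⟨hNc, hNP⟩)
    exact Submodule.map_injective_of_injective W.injective_subtype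
      (hNW.trans (Submodule.map_subtype_top W).symm)
  refine ⟨W, hWc, ⟨Submodule.nontrivial_iff_ne_bot.mpr fun h => hWP (h ▸ bot_le),
    fun N ⟨N', h⟩ => ?_⟩, hWP⟩
  by_cases hNP : N.map W.subtype ≤ P
  · have hN'P : ¬ N'.map W.subtype ≤ P := fun hN'P => hWP (hsup h ▸ sup_le hNP hN'P)
    exact Or.inl (eq_bot_of_isCompl_top (eq_top_of_not_le h.symm hN'P ▸ h))
  · exact Or.inr (eq_top_of_not_le h hNP)

theorem exists_finite_isIndecomposable (R M : Type*) [Ring R] [AddCommGroup M] [Module R M]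
    [IsArtinian R M] [IsNoetherian R M] :
    ∃ 𝒲 : Set (Submodule R M), 𝒲.Finite ∧
      (∀ W ∈ 𝒲, IsComplemented W ∧ IsIndecomposable R W) ∧
      ⨆ W : 𝒲, (W : Submodule R M) = ⊤ := by
  obtain ⟨s, hs, hsup⟩ := CompleteLattice.WellFoundedGT.isSupFiniteCompact _
    {W : Submodule R M | IsComplemented W ∧ IsIndecomposable R W}
  refine ⟨s, s.finite_toSet, hs, ?_⟩
  rw [← sSup_eq_iSup', ← Finset.sup_id_eq_sSup, ← hsup]
  by_contra hne
  obtain ⟨W, hWc, hWi, hW⟩ := exists_isIndecomposable_not_le hne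
  exact hW (le_sSup ⟨hWc, hWi⟩)

end Module

def linearEquivSetoid (R : Type*) [Ring R] {ι : Type*} (M : ι → Type*)
    [∀ i, AddCommGroup (M i)] [∀ i, Module R (M i)] : Setoid ι where
  r i j := Nonempty (M i ≃ₗ[R] M j)
  iseqv := ⟨fun _ => ⟨.refl R _⟩, fun ⟨e⟩ => ⟨e.symm⟩, fun ⟨e⟩ ⟨e'⟩ => ⟨e.trans e'⟩⟩

theorem Setoid.exists_rel_of_le {ι : Type*} [Finite ι] {s t : Setoid ι} (hst : s ≤ t)
    {f : ι → ι} (hf : ∀ i j, s i j ↔ t (f i) (f j)) (j : ι) : ∃ i, t (f i) j := by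
  let F : Quotient s → Quotient t := Quotient.map' f fun i j => (hf i j).mp
  have hF : Function.Injective F := by
    rintro ⟨i⟩ ⟨j⟩ h
    exact Quotient.sound ((hf i j).mpr (Quotient.exact h))
  have hcard : Nat.card (Quotient s) = Nat.card (Quotient t) :=
    (Nat.card_le_card_of_injective F hF).antisymm
      (Nat.card_le_card_of_surjective (Quotient.map' id hst) (by rintro ⟨i⟩; exact ⟨⟦i⟧, rfl⟩))
  obtain ⟨⟨i⟩, hi⟩ := ((Nat.bijective_iff_injective_and_card F).mpr ⟨hF, hcard⟩).2 ⟦j⟧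
  exact ⟨i, Quotient.exact hi⟩

section RightModules

variable {A : Type u} [Ring A]

instance : Module.Projective Aᵐᵒᵖ A := .of_equiv' (opLinearEquiv Aᵐᵒᵖ).symm

theorem LinearMap.apply_eq_op_smul_apply_one {M : Type*} [AddCommGroup M] [Module Aᵐᵒᵖ M]
    (f : A →ₗ[Aᵐᵒᵖ] M) (a : A) : f a = op a • f 1 := by
  rw [← map_smul, op_smul_eq_mul, one_mul]

theorem exists_surjective_of_iSup_eq_top {ι : Type*} {W : ι → Submodule Aᵐᵒᵖ A}
    (hW : ⨆ i, W i = ⊤) (Q : Type*) [AddCommGroup Q] [Module Aᵐᵒᵖ Q]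
    [IsSimpleModule Aᵐᵒᵖ Q] : ∃ i, ∃ f : W i →ₗ[Aᵐᵒᵖ] Q, Function.Surjective f := by
  have := IsSimpleModule.nontrivial Aᵐᵒᵖ Q
  obtain ⟨q, hq⟩ := exists_ne (0 : Q)
  let φ : A →ₗ[Aᵐᵒᵖ] Q :=
    LinearMap.toSpanSingleton Aᵐᵒᵖ Q q ∘ₗ (opLinearEquiv Aᵐᵒᵖ).toLinearMap
  obtain ⟨i, hi⟩ : ∃ i, φ ∘ₗ (W i).subtype ≠ 0 := by
    by_contra! h
    have hφ : ⊤ ≤ LinearMap.ker φ := hW ▸ iSup_le fun i => by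
      rw [← Submodule.range_subtype (W i), LinearMap.range_le_ker_iff, h i]
    exact hq (by simpa [φ] using hφ (Submodule.mem_top (x := 1)))
  exact ⟨i, _, (LinearMap.surjective_or_eq_zero _).resolve_right hi⟩

variable [Module.Injective Aᵐᵒᵖ A] [IsArtinian Aᵐᵒᵖ A] [IsNoetherian Aᵐᵒᵖ A]

theorem exists_injective_linearMap_of_isSimpleModule (Q : Type u) [AddCommGroup Q]
    [Module Aᵐᵒᵖ Q] [IsSimpleModule Aᵐᵒᵖ Q] : ∃ g : Q →ₗ[Aᵐᵒᵖ] A, Function.Injective g := by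
  obtain ⟨𝒲, hfin, h𝒲, hsup⟩ := Module.exists_finite_isIndecomposable Aᵐᵒᵖ A
  have := hfin.to_subtype
  have hind (W : 𝒲) := (h𝒲 W W.2).2
  have (W : 𝒲) : Module.Injective Aᵐᵒᵖ W :=
    Submodule.injective_of_isCompl (h𝒲 W W.2).1.choose_spec
  have (W : 𝒲) : Module.Projective Aᵐᵒᵖ W :=
    Submodule.projective_of_isCompl (h𝒲 W W.2).1.choose_spec
  have (W : 𝒲) : Nontrivial W := (hind W).1
  choose soc hsoc using fun W : 𝒲 => IsAtomic.exists_atom (α := Submodule Aᵐᵒᵖ W)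
  choose top htop using fun W : 𝒲 => IsCoatomic.exists_coatom (α := Submodule Aᵐᵒᵖ W)
  have (W : 𝒲) : IsSimpleModule Aᵐᵒᵖ (soc W) := isSimpleModule_iff_isAtom.mpr (hsoc W)
  have (W : 𝒲) : IsSimpleModule Aᵐᵒᵖ (W ⧸ top W) := isSimpleModule_iff_isCoatom.mpr (htop W)
  have top_of_simple (S : Type u) [AddCommGroup S] [Module Aᵐᵒᵖ S] [IsSimpleModule Aᵐᵒᵖ S] :
      ∃ W : 𝒲, Nonempty ((W ⧸ top W) ≃ₗ[Aᵐᵒᵖ] S) := by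
    obtain ⟨W, f, hf⟩ := exists_surjective_of_iSup_eq_top hsup S
    exact ⟨W, (hind W).nonempty_linearEquiv_of_surjective (top W).mkQ_surjective hf⟩
  choose f hf using fun W => top_of_simple (soc W)
  have hle : linearEquivSetoid Aᵐᵒᵖ (fun W => soc W) ≤
      linearEquivSetoid Aᵐᵒᵖ (fun W : 𝒲 => W ⧸ top W) := fun W W' ⟨e⟩ => by
    obtain ⟨e'⟩ := (hind W).nonempty_linearEquiv_of_isAtom (hind W') (hsoc W) (hsoc W') e
    exact (hind W).nonempty_linearEquiv_of_surjective (top W).mkQ_surjective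
      (g := (top W').mkQ ∘ₗ e'.toLinearMap) ((top W').mkQ_surjective.comp e'.surjective)
  have hiff (W W' : 𝒲) : Nonempty (soc W ≃ₗ[Aᵐᵒᵖ] soc W') ↔
      Nonempty ((f W ⧸ top (f W)) ≃ₗ[Aᵐᵒᵖ] (f W' ⧸ top (f W'))) := by
    obtain ⟨e⟩ := hf W
    obtain ⟨e'⟩ := hf W'
    exact ⟨fun ⟨σ⟩ => ⟨e ≪≫ₗ σ ≪≫ₗ e'.symm⟩, fun ⟨τ⟩ => ⟨e.symm ≪≫ₗ τ ≪≫ₗ e'⟩⟩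
  obtain ⟨W, ⟨eQ⟩⟩ := top_of_simple Q
  obtain ⟨W', ⟨eT⟩⟩ := Setoid.exists_rel_of_le hle hiff W
  obtain ⟨eS⟩ := hf W'
  exact ⟨(W' : Submodule Aᵐᵒᵖ A).subtype ∘ₗ (soc W').subtype ∘ₗ
      (eQ.symm ≪≫ₗ eT.symm ≪≫ₗ eS).toLinearMap,
    Subtype.val_injective.comp (Subtype.val_injective.comp (LinearEquiv.injective _))⟩

theorem exists_linearMap_apply_ne_zero {M : Type u} [AddCommGroup M] [Module Aᵐᵒᵖ M] {y : M}
    (hy : y ≠ 0) : ∃ h : M →ₗ[Aᵐᵒᵖ] A, h y ≠ 0 := by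
  let φ : A →ₗ[Aᵐᵒᵖ] M :=
    LinearMap.toSpanSingleton Aᵐᵒᵖ M y ∘ₗ (opLinearEquiv Aᵐᵒᵖ).toLinearMap
  have hφ : φ 1 = y := by simp [φ]
  obtain ⟨m, hm, hle⟩ := (eq_top_or_exists_le_coatom (LinearMap.ker φ)).resolve_left
    fun h => hy (hφ ▸ LinearMap.ker_eq_top.mp h ▸ rfl)
  have := isSimpleModule_iff_isCoatom.mpr hm
  obtain ⟨g, hg⟩ := exists_injective_linearMap_of_isSimpleModule (A := A) (A ⧸ m)
  obtain ⟨h, hh⟩ := Module.Injective.extension_property Aᵐᵒᵖ A _ _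
    ((LinearMap.ker φ).liftQ φ le_rfl)
    (LinearMap.ker_eq_bot.mp (Submodule.ker_liftQ_eq_bot _ _ _ le_rfl))
    ((LinearMap.ker φ).liftQ (g ∘ₗ m.mkQ) fun x hx => by
      simp [(Submodule.Quotient.mk_eq_zero m).mpr (hle hx)])
  refine ⟨h, fun h0 => hm.ne_top (eq_top_iff.mpr fun a _ => ?_)⟩
  have h1 : (1 : A) ∈ m := by
    rw [← Submodule.Quotient.mk_eq_zero, ← map_eq_zero_iff g hg, ← h0, ← hφ]
    exact (LinearMap.congr_fun hh (Submodule.Quotient.mk 1)).symm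
  simpa using m.smul_mem (op a) h1

theorem mem_of_forall_lAnn_mul_eq_zero (T : Submodule Aᵐᵒᵖ A) {z : A}
    (hz : ∀ c ∈ lAnn (T : Set A), c * z = 0) : z ∈ T := by
  by_contra hzT
  obtain ⟨h, hh⟩ := exists_linearMap_apply_ne_zero (A := A) (y := T.mkQ z)
    (by rwa [ne_eq, Submodule.mkQ_apply, Submodule.Quotient.mk_eq_zero])
  have key (a : A) : h (T.mkQ a) = h (T.mkQ 1) * a :=
    (h ∘ₗ T.mkQ).apply_eq_op_smul_apply_one a
  refine hh ((key z).trans (hz _ fun t ht => ?_))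
  rw [← key, Submodule.mkQ_apply, (Submodule.Quotient.mk_eq_zero T).mpr ht, map_zero]

end RightModules

theorem mul_mem_lAnn {A : Type*} [Ring A] {S : Set A} {a : A} (ha : a ∈ lAnn S) (b : A) :
    b * a ∈ lAnn S := fun x hx => by rw [mul_assoc, ha x hx, mul_zero]

/-- Let `A` be a finite-dimensional selfinjective algebra over a field `K`,
`I` a two-sided ideal of `A`, and `e` an idempotent with `l_A(I) = eI`.  Then, inside the
corner algebra `eAe = {x | e * x * e = x}`, the left annihilator of `I` and the right
annihilator of `I` both coincide with `eIe`. -/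
theorem corner_annihilators_eq_eIe
    {K A : Type*} [Field K] [Ring A] [Algebra K A] [FiniteDimensional K A]
    [Module.Injective Aᵐᵒᵖ A]
    (I : Ideal A) (hI : ∀ x ∈ I, ∀ a : A, x * a ∈ I)  -- `I` is a two-sided ideal
    (e : A) (he : IsIdempotentElem e)
    (hann : lAnn (I : Set A) = (fun x => e * x) '' (I : Set A)) :
    {z : A | e * z * e = z ∧ ∀ y ∈ I, z * y = 0} = (fun x => e * x * e) '' (I : Set A) ∧
    {z : A | e * z * e = z ∧ ∀ y ∈ I, y * z = 0} = (fun x => e * x * e) '' (I : Set A) := by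
  have : IsArtinian Aᵐᵒᵖ A := isArtinian_of_tower K inferInstance
  have : IsNoetherian Aᵐᵒᵖ A := isNoetherian_of_tower K inferInstance
  have e_mul_mem_lAnn {x} (hx : x ∈ I) : e * x ∈ lAnn (I : Set A) := hann ▸ ⟨x, hx, rfl⟩
  have mem_of_mem_lAnn {w} (hw : w ∈ lAnn (I : Set A)) : w ∈ I ∧ e * w = w := by
    obtain ⟨x, hx, rfl⟩ := hann ▸ hw
    exact ⟨I.mul_mem_left e hx, by rw [← mul_assoc, he.eq]⟩
  have mul_e_mem_lAnn {x} (hx : x ∈ I) : x * e ∈ lAnn (I : Set A) := fun y hy => by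
    rw [mul_assoc, ← (mem_of_mem_lAnn (mul_mem_lAnn (e_mul_mem_lAnn hy) x)).2, ← mul_assoc]
    exact e_mul_mem_lAnn hx _ (I.mul_mem_left e hy)
  have corner (x : A) : e * (e * x * e) * e = e * x * e := by
    simp only [← mul_assoc, he.eq]
    rw [mul_assoc _ e e, he.eq]
  let T : Submodule Aᵐᵒᵖ A := { I.toAddSubmonoid with smul_mem' := fun r x hx => hI x hx r.unop }
  refine ⟨Set.ext fun z => ⟨fun ⟨hz, hzI⟩ => ⟨z, (mem_of_mem_lAnn hzI).1, hz⟩, ?_⟩,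
    Set.ext fun z => ⟨fun ⟨hz, hIz⟩ => ⟨z, ?_, hz⟩, ?_⟩⟩
  · rintro ⟨x, hx, rfl⟩
    exact ⟨corner x, fun y hy => by
      simpa only [mul_assoc] using mul_mem_lAnn (mul_e_mem_lAnn hx) e y hy⟩
  · refine mem_of_forall_lAnn_mul_eq_zero T fun c hc => ?_
    obtain ⟨x, hx, rfl⟩ := hann ▸ hc
    rw [mul_assoc, hIz x hx, mul_zero]
  · rintro ⟨x, hx, rfl⟩
    exact ⟨corner x, fun y hy => by
      simpa only [mul_assoc] using mul_e_mem_lAnn hy (x * e) (hI x hx e)⟩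
end

section
/- Let A be a K-algebra, I an ideal of A, and e an idempotent of A such that l_{eAe}(I) = eIe = r_{eAe}(I), so that I becomes an (eAe/eIe)-bimodule. Then the K-vector space A[I] = (eAe/eIe) ⊕ I with multiplication (b,x)·(c,y) = (bc, by + xc + xy) is an associative K-algebra with identity (e + eIe, 1_A − e). -/
/-- The multiplication `(b,x)·(c,y) = (bc, by + xc + xy)` on pairs, used to define the
deformed algebra `A[I] = (eAe/eIe) ⊕ I` on representatives. -/
def defMul {A : Type*} [Ring A] (p q : A × A) : A × A :=
  (p.1 * q.1, p.1 * q.2 + p.2 * q.1 + p.2 * q.2)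

/-- Representatives of elements of `A[I] = (eAe/eIe) ⊕ I`: pairs `(b,x)` with `b ∈ eAe`
and `x ∈ I`.  Two representatives define the same element of `A[I]` iff their first
components are congruent modulo `eIe` and their second components are equal. -/
def defRel {A : Type*} [Ring A] (I : Ideal A) (e : A) (p q : A × A) : Prop :=
  p.1 - q.1 ∈ (fun x => e * x * e) '' (I : Set A) ∧ p.2 = q.2

/-- Let `A` be a `K`-algebra, `I` an ideal of `A`, and `e` an idempotent
with `l_{eAe}(I) = eIe = r_{eAe}(I)` (so that `I` is an `(eAe/eIe)`-bimodule).  Then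
`A[I] = (eAe/eIe) ⊕ I` with multiplication `(b,x)·(c,y) = (bc, by + xc + xy)` is an
associative `K`-algebra with identity `(e + eIe, 1_A - e)`.  This is expressed on
representatives: the carrier is closed under the multiplication, the multiplication is
well defined on congruence classes, it is associative, bilinear over `K`, distributive,
and `(e, 1 - e)` is a two-sided identity. -/
theorem deformed_algebra_is_algebra
    {K A : Type*} [Field K] [Ring A] [Algebra K A]
    (I : Ideal A) (hI : ∀ x ∈ I, ∀ a : A, x * a ∈ I)  -- `I` is a two-sided ideal
    (e : A) (he : IsIdempotentElem e)
    (h1e : (1 : A) - e ∈ I)  -- `e` is a residual identity, so `(e + eIe, 1 - e)` is a pair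
    (hl : {z : A | e * z * e = z ∧ ∀ y ∈ I, z * y = 0} =
      (fun x => e * x * e) '' (I : Set A))  -- `l_{eAe}(I) = eIe`
    (hr : {z : A | e * z * e = z ∧ ∀ y ∈ I, y * z = 0} =
      (fun x => e * x * e) '' (I : Set A)) :  -- `r_{eAe}(I) = eIe`
    -- the multiplication preserves the carrier `eAe × I`
    (∀ p q : A × A, e * p.1 * e = p.1 → p.2 ∈ I → e * q.1 * e = q.1 → q.2 ∈ I →
      e * (defMul p q).1 * e = (defMul p q).1 ∧ (defMul p q).2 ∈ I) ∧
    -- the multiplication is well defined on classes modulo `eIe` in the first component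
    (∀ p p' q q' : A × A, e * p.1 * e = p.1 → p.2 ∈ I → e * q.1 * e = q.1 → q.2 ∈ I →
      e * p'.1 * e = p'.1 → p'.2 ∈ I → e * q'.1 * e = q'.1 → q'.2 ∈ I →
      defRel I e p p' → defRel I e q q' → defRel I e (defMul p q) (defMul p' q')) ∧
    -- associativity
    (∀ p q r : A × A, defMul (defMul p q) r = defMul p (defMul q r)) ∧
    -- distributivity
    (∀ p q r : A × A, defMul p (q + r) = defMul p q + defMul p r) ∧
    (∀ p q r : A × A, defMul (p + q) r = defMul p r + defMul q r) ∧
    -- `K`-bilinearity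
    (∀ (k : K) (p q : A × A), defMul (k • p) q = k • defMul p q) ∧
    (∀ (k : K) (p q : A × A), defMul p (k • q) = k • defMul p q) ∧
    -- `(e, 1 - e)` is a two-sided identity on the carrier
    (∀ p : A × A, e * p.1 * e = p.1 →
      defMul ((e, 1 - e) : A × A) p = p ∧ defMul p ((e, 1 - e) : A × A) = p) := by
  have idem : e * e = e := he.eq
  have left_e : ∀ a : A, e * a * e = a → e * a = a := by
    intro a ha
    conv_lhs => rw [← ha, ← mul_assoc, ← mul_assoc, idem]
    exact ha
  have right_e : ∀ a : A, e * a * e = a → a * e = a := by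
    intro a ha
    conv_lhs => rw [← ha, mul_assoc, idem]
    exact ha
  constructor
  · -- closure
    intro p q hp1 hp2 hq1 hq2
    refine ⟨?_, ?_⟩
    · have h : e * (p.1 * q.1) * e = (e * p.1) * (q.1 * e) := by noncomm_ring
      show e * (p.1 * q.1) * e = p.1 * q.1
      rw [h, left_e _ hp1, right_e _ hq1]
    · exact add_mem (add_mem (I.mul_mem_left _ hq2) (hI _ hp2 _)) (I.mul_mem_left _ hq2)
  refine ⟨?_, ?_, ?_, ?_, ?_, ?_, ?_⟩
  · -- well-definedness
    intro p p' q q' hp1 hp2 hq1 hq2 hp1' hp2' hq1' hq2' hpp hqq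
    obtain ⟨hpd, hps⟩ := hpp
    obtain ⟨hqd, hqs⟩ := hqq
    have hpl : ∀ y ∈ I, (p.1 - p'.1) * y = 0 := (hl ▸ hpd).2
    have hqr : ∀ y ∈ I, y * (q.1 - q'.1) = 0 := (hr ▸ hqd).2
    constructor
    · -- first components congruent mod eIe
      obtain ⟨x, hx, hxe⟩ := hpd
      obtain ⟨y, hy, hye⟩ := hqd
      simp only at hxe hye
      have key : p.1 * q.1 - p'.1 * q'.1 = e * (x * e * q.1 * e + p'.1 * y) * e := by
        have h1 : p.1 * q.1 - p'.1 * q'.1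
            = (p.1 - p'.1) * q.1 + p'.1 * (q.1 - q'.1) := by noncomm_ring
        rw [h1, ← hxe, ← hye]
        have h2 : e * x * e * q.1 = e * (x * e * q.1 * e) * e := by
          have h2a : e * (x * e * q.1 * e) * e = e * x * e * (q.1 * (e * e)) := by
            noncomm_ring
          rw [h2a, idem, right_e _ hq1]
        have h3 : p'.1 * (e * y * e) = e * (p'.1 * y) * e := by
          have h3a : p'.1 * (e * y * e) = p'.1 * e * y * e := by noncomm_ring
          have h3b : e * (p'.1 * y) * e = e * p'.1 * y * e := by noncomm_ring
          rw [h3a, h3b, right_e _ hp1', left_e _ hp1']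
        rw [h2, h3]
        noncomm_ring
      refine ⟨x * e * q.1 * e + p'.1 * y,
        I.add_mem (hI _ (hI _ (hI _ hx e) q.1) e) (I.mul_mem_left _ hy), ?_⟩
      show e * (x * e * q.1 * e + p'.1 * y) * e = (defMul p q).1 - (defMul p' q').1
      simp only [defMul]
      exact key.symm
    · show p.1 * q.2 + p.2 * q.1 + p.2 * q.2
          = p'.1 * q'.2 + p'.2 * q'.1 + p'.2 * q'.2
      have h1 : p.1 * q.2 = p'.1 * q.2 := by
        have := hpl q.2 hq2
        rw [sub_mul, sub_eq_zero] at this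
        exact this
      have h2 : p.2 * q.1 = p.2 * q'.1 := by
        have := hqr p.2 hp2
        rw [mul_sub, sub_eq_zero] at this
        exact this
      rw [h1, h2, hps, hqs]
  · intro p q r
    simp only [defMul, Prod.mk.injEq]
    constructor <;> noncomm_ring
  · intro p q r
    simp only [defMul, Prod.ext_iff, Prod.fst_add, Prod.snd_add]
    constructor <;> noncomm_ring
  · intro p q r
    simp only [defMul, Prod.ext_iff, Prod.fst_add, Prod.snd_add]
    constructor <;> noncomm_ring
  · intro k p q
    simp only [defMul, Prod.ext_iff, Prod.smul_fst, Prod.smul_snd, smul_mul_assoc, smul_add,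
      and_self]
  · intro k p q
    simp only [defMul, Prod.ext_iff, Prod.smul_fst, Prod.smul_snd, mul_smul_comm, smul_add,
      and_self]
  · intro p hp1
    have hep := left_e _ hp1
    have hpe := right_e _ hp1
    constructor
    · show ((e * p.1 : A), e * p.2 + (1 - e) * p.1 + (1 - e) * p.2) = p
      have h0 : (1 - e) * p.1 = 0 := by rw [sub_mul, one_mul, hep, sub_self]
      rw [hep, h0]
      refine Prod.ext rfl ?_
      show e * p.2 + 0 + (1 - e) * p.2 = p.2
      noncomm_ring
    · show ((p.1 * e : A), p.1 * (1 - e) + p.2 * e + p.2 * (1 - e)) = p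
      have h0 : p.1 * (1 - e) = 0 := by rw [mul_sub, mul_one, hpe, sub_self]
      rw [hpe, h0]
      refine Prod.ext rfl ?_
      show 0 + p.2 * e + p.2 * (1 - e) = p.2
      noncomm_ring
end
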